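/- For w≡1 and f:[a,b]×[c,d]→ℝ C² with |∂²f/∂t∂s| ≤ M, for all (x,y)∈[a,b]×[c,d]: |f(x,y) - (1/(b-a))∫_a^b f(t,y)dt - (1/(d-c))∫_c^d f(x,s)ds + (1/((b-a)(d-c)))∫_a^b∫_c^d f(t,s)ds dt| ≤ [(b-a)²/4+(x-(a+b)/2)²][(d-c)²/4+(y-(c+d)/2)²]·M/((b-a)(d-c)). -/

import Mathlib

open Set MeasureTheory intervalIntegral

/-!
Writing `Φ s = (b - a) f(x, s) - ∫ₐᵇ f(t, s) dt`, Fubini turns the left-hand side into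
`((d - c) Φ(y) - ∫_c^d Φ) / ((b - a)(d - c))`, so the inequality is the one-dimensional Ostrowski
bound `|(b - a) g(x) - ∫ₐᵇ g| ≤ L ∫ₐᵇ |x - t| dt` for `g` with `|g x - g t| ≤ L |x - t|`, used twice:
once for `t ↦ f(t, s₂) - f(t, s₁)`, which is `M |s₂ - s₁|`-Lipschitz by the mean value theorem
applied in both variables, showing that `Φ` is `M ∫ₐᵇ |x - t| dt`-Lipschitz at `y`, and once for `Φ`.
-/

theorem integral_abs_sub_of_mem_Icc {a b x : ℝ} (hx : x ∈ Icc a b) :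
    ∫ t in a..b, |x - t| = (b - a) ^ 2 / 4 + (x - (a + b) / 2) ^ 2 := by
  obtain ⟨hax, hxb⟩ := hx
  have hleft : ∫ t in a..x, |x - t| = ∫ t in a..x, (x - t) := by
    refine integral_congr fun t ht => abs_of_nonneg ?_
    rw [uIcc_of_le hax] at ht
    linarith [ht.2]
  have hright : ∫ t in x..b, |x - t| = ∫ t in x..b, (t - x) := by
    refine integral_congr fun t ht => ?_
    rw [uIcc_of_le hxb] at ht
    simp only [abs_sub_comm x t, abs_of_nonneg (sub_nonneg.2 ht.1)]
  have hcont : Continuous fun t : ℝ => |x - t| := by fun_prop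
  rw [← integral_add_adjacent_intervals (hcont.intervalIntegrable a x)
    (hcont.intervalIntegrable x b), hleft, hright,
    integral_sub intervalIntegrable_const intervalIntegral.intervalIntegrable_id,
    integral_sub intervalIntegral.intervalIntegrable_id intervalIntegrable_const,
    intervalIntegral.integral_const, intervalIntegral.integral_const, integral_id, integral_id, smul_eq_mul, smul_eq_mul]
  ring

theorem abs_mul_sub_integral_le {g : ℝ → ℝ} {a b x L : ℝ} (hx : x ∈ Icc a b)
    (hg : IntervalIntegrable g volume a b) (hL : ∀ t ∈ Icc a b, |g x - g t| ≤ L * |x - t|) :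
    |(b - a) * g x - ∫ t in a..b, g t| ≤ L * ((b - a) ^ 2 / 4 + (x - (a + b) / 2) ^ 2) := by
  have hab : a ≤ b := hx.1.trans hx.2
  have hbound : IntervalIntegrable (fun t => L * |x - t|) volume a b :=
    (continuous_const.mul (continuous_const.sub continuous_id).abs).intervalIntegrable a b
  calc |(b - a) * g x - ∫ t in a..b, g t|
      = |∫ t in a..b, (g x - g t)| := by
        rw [integral_sub intervalIntegrable_const hg, intervalIntegral.integral_const, smul_eq_mul]
    _ ≤ ∫ t in a..b, L * |x - t| :=
        norm_integral_le_of_norm_le (f := fun t => g x - g t) hab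
          (Filter.Eventually.of_forall fun t ht => hL t (Ioc_subset_Icc_self ht)) hbound
    _ = L * ((b - a) ^ 2 / 4 + (x - (a + b) / 2) ^ 2) := by
        rw [intervalIntegral.integral_const_mul, integral_abs_sub_of_mem_Icc hx]

theorem abs_sub_sub_sub_le_of_hasDerivAt {S T : Set ℝ} (hS : Convex ℝ S) (hT : Convex ℝ T)
    {f fx fxy : ℝ → ℝ → ℝ} {M : ℝ}
    (hfx : ∀ x ∈ S, ∀ y ∈ T, HasDerivAt (fun t => f t y) (fx x y) x)
    (hfxy : ∀ x ∈ S, ∀ y ∈ T, HasDerivAt (fun s => fx x s) (fxy x y) y)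
    (hM : ∀ x ∈ S, ∀ y ∈ T, |fxy x y| ≤ M) {t₁ t₂ s₁ s₂ : ℝ} (ht₁ : t₁ ∈ S) (ht₂ : t₂ ∈ S)
    (hs₁ : s₁ ∈ T) (hs₂ : s₂ ∈ T) :
    |(f t₂ s₂ - f t₂ s₁) - (f t₁ s₂ - f t₁ s₁)| ≤ M * |s₂ - s₁| * |t₂ - t₁| := by
  have hfx_sub : ∀ t ∈ S, ‖fx t s₂ - fx t s₁‖ ≤ M * ‖s₂ - s₁‖ := fun t ht =>
    hT.norm_image_sub_le_of_norm_hasDerivWithin_le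
      (fun u hu => (hfxy t ht u hu).hasDerivWithinAt) (hM t ht) hs₁ hs₂
  exact hS.norm_image_sub_le_of_norm_hasDerivWithin_le (f := fun t => f t s₂ - f t s₁)
    (fun t ht => ((hfx t ht s₂ hs₂).sub (hfx t ht s₁ hs₁)).hasDerivWithinAt) hfx_sub ht₁ ht₂

section Rectangle

variable {a b c d : ℝ} {f : ℝ → ℝ → ℝ}

theorem ContinuousOn.integrable_uncurry_restrict_Ioc_prod
    (hf : ContinuousOn (fun p : ℝ × ℝ => f p.1 p.2) (Icc a b ×ˢ Icc c d)) :
    Integrable (Function.uncurry f)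
      ((volume.restrict (Ioc a b)).prod (volume.restrict (Ioc c d))) := by
  rw [Measure.prod_restrict, ← Measure.volume_eq_prod]
  exact (hf.integrableOn_compact (isCompact_Icc.prod isCompact_Icc)).mono_set
    (prod_mono Ioc_subset_Icc_self Ioc_subset_Icc_self)

theorem ContinuousOn.intervalIntegrable_integral_left (hab : a ≤ b) (hcd : c ≤ d)
    (hf : ContinuousOn (fun p : ℝ × ℝ => f p.1 p.2) (Icc a b ×ˢ Icc c d)) :
    IntervalIntegrable (fun s => ∫ t in a..b, f t s) volume c d := by
  simp only [integral_of_le hab]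
  exact (intervalIntegrable_iff_integrableOn_Ioc_of_le hcd).2
    hf.integrable_uncurry_restrict_Ioc_prod.integral_prod_right

theorem ContinuousOn.integral_integral_swap (hab : a ≤ b) (hcd : c ≤ d)
    (hf : ContinuousOn (fun p : ℝ × ℝ => f p.1 p.2) (Icc a b ×ˢ Icc c d)) :
    ∫ s in c..d, ∫ t in a..b, f t s = ∫ t in a..b, ∫ s in c..d, f t s := by
  simp only [integral_of_le hab, integral_of_le hcd]
  exact (MeasureTheory.integral_integral_swap hf.integrable_uncurry_restrict_Ioc_prod).symm

theorem ContinuousOn.intervalIntegrable_left (hab : a ≤ b)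
    (hf : ContinuousOn (fun p : ℝ × ℝ => f p.1 p.2) (Icc a b ×ˢ Icc c d)) {s : ℝ}
    (hs : s ∈ Icc c d) : IntervalIntegrable (fun t => f t s) volume a b :=
  ((uIcc_of_le hab).symm ▸ hf.comp (continuous_id.prodMk continuous_const).continuousOn fun _ ht => ⟨ht, hs⟩ :
    ContinuousOn (fun t => f t s) (uIcc a b)).intervalIntegrable

theorem ContinuousOn.intervalIntegrable_right (hcd : c ≤ d)
    (hf : ContinuousOn (fun p : ℝ × ℝ => f p.1 p.2) (Icc a b ×ˢ Icc c d)) {t : ℝ}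
    (ht : t ∈ Icc a b) : IntervalIntegrable (fun s => f t s) volume c d :=
  ((uIcc_of_le hcd).symm ▸ hf.comp (continuous_const.prodMk continuous_id).continuousOn fun _ hs => ⟨ht, hs⟩ :
    ContinuousOn (fun s => f t s) (uIcc c d)).intervalIntegrable

end Rectangle

theorem ostrowski_double_unit_weight_general (a b c d M : ℝ) (hab : a < b) (hcd : c < d)
    (f fx fxy : ℝ → ℝ → ℝ)
    (hfc : ContinuousOn (fun p : ℝ × ℝ => f p.1 p.2) (Icc a b ×ˢ Icc c d))
    (hfx : ∀ x ∈ Icc a b, ∀ y ∈ Icc c d, HasDerivAt (fun t => f t y) (fx x y) x)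
    (hfxy : ∀ x ∈ Icc a b, ∀ y ∈ Icc c d, HasDerivAt (fun s => fx x s) (fxy x y) y)
    (hM : ∀ x ∈ Icc a b, ∀ y ∈ Icc c d, |fxy x y| ≤ M) :
    ∀ x ∈ Icc a b, ∀ y ∈ Icc c d,
      |f x y - (1 / (b - a)) * (∫ t in a..b, f t y) -
          (1 / (d - c)) * (∫ s in c..d, f x s) +
          (1 / ((b - a) * (d - c))) * ∫ t in a..b, ∫ s in c..d, f t s| ≤
        ((b - a) ^ 2 / 4 + (x - (a + b) / 2) ^ 2) *
          ((d - c) ^ 2 / 4 + (y - (c + d) / 2) ^ 2) * M / ((b - a) * (d - c)) := by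
  intro x hx y hy
  set Φ : ℝ → ℝ := fun s => (b - a) * f x s - ∫ t in a..b, f t s
  have hΦ_lip : ∀ s ∈ Icc c d,
      |Φ y - Φ s| ≤ M * ((b - a) ^ 2 / 4 + (x - (a + b) / 2) ^ 2) * |y - s| := by
    intro s hs
    have hdiff : Φ y - Φ s = (b - a) * (f x y - f x s) - ∫ t in a..b, (f t y - f t s) := by
      rw [integral_sub (hfc.intervalIntegrable_left hab.le hy)
        (hfc.intervalIntegrable_left hab.le hs)]
      ring
    rw [hdiff, mul_right_comm]
    exact abs_mul_sub_integral_le hx ((hfc.intervalIntegrable_left hab.le hy).sub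
      (hfc.intervalIntegrable_left hab.le hs)) fun t ht =>
      abs_sub_sub_sub_le_of_hasDerivAt (convex_Icc a b) (convex_Icc c d) hfx hfxy hM ht hx hs hy
  have hΦ_int : IntervalIntegrable Φ volume c d :=
    ((hfc.intervalIntegrable_right hcd.le hx).const_mul _).sub
      (hfc.intervalIntegrable_integral_left hab.le hcd.le)
  have hlhs : f x y - (1 / (b - a)) * (∫ t in a..b, f t y) -
      (1 / (d - c)) * (∫ s in c..d, f x s) +
      (1 / ((b - a) * (d - c))) * (∫ t in a..b, ∫ s in c..d, f t s) =
      ((d - c) * Φ y - ∫ s in c..d, Φ s) / ((b - a) * (d - c)) := by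
    rw [integral_sub ((hfc.intervalIntegrable_right hcd.le hx).const_mul _)
      (hfc.intervalIntegrable_integral_left hab.le hcd.le), intervalIntegral.integral_const_mul,
      hfc.integral_integral_swap hab.le hcd.le]
    field_simp [(sub_pos.2 hab).ne', (sub_pos.2 hcd).ne']
    ring
  rw [hlhs, abs_div, abs_of_pos (mul_pos (sub_pos.2 hab) (sub_pos.2 hcd))]
  gcongr
  exact (abs_mul_sub_integral_le hy hΦ_int hΦ_lip).trans_eq (by ring)

theorem ostrowski_double_unit_weight (a b c d M : ℝ) (hab : a < b) (hcd : c < d)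
    (f fx fxy : ℝ → ℝ → ℝ)
    (hfc : ContinuousOn (fun p : ℝ × ℝ => f p.1 p.2) (Icc a b ×ˢ Icc c d))
    (hfx : ∀ x ∈ Icc a b, ∀ y ∈ Icc c d, HasDerivAt (fun t => f t y) (fx x y) x)
    (hfxy : ∀ x ∈ Icc a b, ∀ y ∈ Icc c d, HasDerivAt (fun s => fx x s) (fxy x y) y)
    (hfxyc : ContinuousOn (fun p : ℝ × ℝ => fxy p.1 p.2) (Icc a b ×ˢ Icc c d))
    (hM : ∀ x ∈ Icc a b, ∀ y ∈ Icc c d, |fxy x y| ≤ M) :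
    ∀ x ∈ Icc a b, ∀ y ∈ Icc c d,
      |f x y - (1 / (b - a)) * (∫ t in a..b, f t y) -
          (1 / (d - c)) * (∫ s in c..d, f x s) +
          (1 / ((b - a) * (d - c))) * ∫ t in a..b, ∫ s in c..d, f t s| ≤
        ((b - a) ^ 2 / 4 + (x - (a + b) / 2) ^ 2) *
          ((d - c) ^ 2 / 4 + (y - (c + d) / 2) ^ 2) * M / ((b - a) * (d - c)) :=
  ostrowski_double_unit_weight_general a b c d M hab hcd f fx fxy hfc hfx hfxy hM
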